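/- arXiv:2212.13548 — 4 statements merged into one kernel-verified Lean document; each statement's English description precedes it below -/
import Mathlib

section
/- Let A, B, C be positive semidefinite n×n Hermitian matrices. Then rank(A+B+C) + rank(C) ≤ rank(A+C) + rank(B+C). -/
open Matrix
open scoped ComplexOrder

/-! The kernel of a sum of positive semidefinite matrices is the intersection of their kernels,
so by rank–nullity the inequality becomes `dim (U ⊓ K) + dim (V ⊓ K) ≤ dim (U ⊓ V ⊓ K) + dim K`
for the kernels `U, V, K` of `A, B, C`, which is the modular law for subspaces of `K`. -/

theorem Submodule.finrank_add_finrank_le_finrank_inf_add_finrank {K V : Type*} [DivisionRing K]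
    [AddCommGroup V] [Module K V] [FiniteDimensional K V] {U W X : Submodule K V}
    (hU : U ≤ X) (hW : W ≤ X) :
    Module.finrank K U + Module.finrank K W ≤ Module.finrank K ↥(U ⊓ W) + Module.finrank K X := by
  rw [← Submodule.finrank_sup_add_finrank_inf_eq, add_comm]
  exact Nat.add_le_add_left (Submodule.finrank_mono (sup_le hU hW)) _

theorem Matrix.rank_add_finrank_ker_mulVecLin {K m n : Type*} [Field K] [Fintype n]
    (A : Matrix m n K) :
    A.rank + Module.finrank K (LinearMap.ker A.mulVecLin) = Fintype.card n := by
  simpa [Matrix.rank] using LinearMap.finrank_range_add_finrank_ker A.mulVecLin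

theorem Matrix.PosSemidef.ker_mulVecLin_add {𝕜 n : Type*} [RCLike 𝕜] [Fintype n]
    {A B : Matrix n n 𝕜} (hA : A.PosSemidef) (hB : B.PosSemidef) :
    LinearMap.ker (A + B).mulVecLin = LinearMap.ker A.mulVecLin ⊓ LinearMap.ker B.mulVecLin := by
  ext x
  simp only [LinearMap.mem_ker, Submodule.mem_inf, mulVecLin_apply, add_mulVec]
  refine ⟨fun h ↦ ?_, fun ⟨hAx, hBx⟩ ↦ by rw [hAx, hBx, add_zero]⟩
  have hsum : star x ⬝ᵥ A *ᵥ x + star x ⬝ᵥ B *ᵥ x = 0 := by rw [← dotProduct_add, h, dotProduct_zero]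
  obtain ⟨hAx, hBx⟩ :=
    (add_eq_zero_iff_of_nonneg (hA.dotProduct_mulVec_nonneg x) (hB.dotProduct_mulVec_nonneg x)).mp hsum
  exact ⟨(hA.dotProduct_mulVec_zero_iff x).mp hAx, (hB.dotProduct_mulVec_zero_iff x).mp hBx⟩

/-- Submodularity of the rank of sums of positive semidefinite Hermitian
matrices: `rank (A + B + C) + rank C ≤ rank (A + C) + rank (B + C)`. -/
theorem psd_rank_submodular
    (n : ℕ) (A B C : Matrix (Fin n) (Fin n) ℂ)
    (hA : A.PosSemidef) (hB : B.PosSemidef) (hC : C.PosSemidef) :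
    (A + B + C).rank + C.rank ≤ (A + C).rank + (B + C).rank := by
  have hABC := (A + B + C).rank_add_finrank_ker_mulVecLin
  have hAC := (A + C).rank_add_finrank_ker_mulVecLin
  have hBC := (B + C).rank_add_finrank_ker_mulVecLin
  have hC' := C.rank_add_finrank_ker_mulVecLin
  rw [(hA.add hB).ker_mulVecLin_add hC, hA.ker_mulVecLin_add hB] at hABC
  rw [hA.ker_mulVecLin_add hC] at hAC
  rw [hB.ker_mulVecLin_add hC] at hBC
  have hker := Submodule.finrank_add_finrank_le_finrank_inf_add_finrank
    (inf_le_right : LinearMap.ker A.mulVecLin ⊓ LinearMap.ker C.mulVecLin ≤ _)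
    (inf_le_right : LinearMap.ker B.mulVecLin ⊓ LinearMap.ker C.mulVecLin ≤ _)
  rw [inf_inf_inf_comm, inf_idem] at hker
  omega
end

section
/- Let α₁, ..., αₙ be positive semidefinite n×n Hermitian matrices such that for every subset I ⊆ [n], rank(∑_{i∈I} α_i) ≥ |I|. Then the mixed discriminant D(α₁,...,αₙ) > 0. -/
/-!
Write each `αᵢ = ∑ⱼ cᵢⱼ cᵢⱼ*` as a sum of rank-one matrices. The mixed discriminant is
multilinear and `D(v₁v₁*, …, vₙvₙ*) = |det(v₁, …, vₙ)|² / n!`, so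
`D(α) = ∑_f |det(c_{1,f(1)}, …, c_{n,f(n)})|² / n!` is a sum of nonnegative terms, and it suffices
to find one transversal `f` for which these vectors are linearly independent. As the range of
`∑_{i ∈ I} αᵢ` lies in the span of the `cᵢⱼ` with `i ∈ I`, the rank hypothesis gives the
condition of Rado's theorem for the families `(cᵢⱼ)ⱼ`.

Rado's theorem is proved relative to a subspace `U`, by induction: let `T` be the largest tight
set (one with equality in Rado's condition); tight sets are closed under union by the
submodularity of `finrank`. The next family has a vector `v` outside `U + ⟨T⟩`, and adding `v`
to `U` preserves Rado's condition on the remaining families.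
-/

open Matrix
open scoped ComplexOrder

/-- The mixed discriminant of `n` matrices `A₁, ..., Aₙ`:
`D(A₁,...,Aₙ) = (1/n!) ∑_{σ ∈ Sₙ} det M_σ`, where the `j`-th column of `M_σ`
is the `j`-th column of `A_{σ(j)}`.  This equals
`(1/n!) ∂ⁿ/∂t₁⋯∂tₙ det (t₁A₁ + ⋯ + tₙAₙ)`. -/
noncomputable def mixedDiscriminant (n : ℕ) (A : Fin n → Matrix (Fin n) (Fin n) ℂ) : ℂ :=
  (n.factorial : ℂ)⁻¹ * ∑ σ : Equiv.Perm (Fin n), (Matrix.of fun i j => A (σ j) i j).det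

open Finset Module Submodule Nat

namespace Submodule

variable {K V ι : Type*} [Field K] [AddCommGroup V] [Module K V]

-- Rado's condition for the images of the `W i` in `V ⧸ U`, stated without the quotient.
def RadoCondition (U : Submodule K V) (W : ι → Submodule K V) (S : Finset ι) : Prop :=
  ∀ I ⊆ S, #I + finrank K U ≤ finrank K ↥(U ⊔ ⨆ i ∈ I, W i)

def IsTight (U : Submodule K V) (W : ι → Submodule K V) (I : Finset ι) : Prop :=
  finrank K ↥(U ⊔ ⨆ i ∈ I, W i) = #I + finrank K U

variable {U : Submodule K V} {W : ι → Submodule K V} {S I J T : Finset ι}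

theorem RadoCondition.mono (h : RadoCondition U W S) (hTS : T ⊆ S) : RadoCondition U W T :=
  fun I hI => h I (hI.trans hTS)

theorem isTight_empty : IsTight U W ∅ := by
  rw [IsTight, ← Finset.iSup_coe, coe_empty, iSup_emptyset, sup_bot_eq, card_empty, zero_add]

theorem IsTight.union [FiniteDimensional K V] [DecidableEq ι] (h : RadoCondition U W S)
    (hIS : I ⊆ S) (hJS : J ⊆ S) (hI : IsTight U W I) (hJ : IsTight U W J) : IsTight U W (I ∪ J) := by
  refine le_antisymm ?_ (h _ (union_subset hIS hJS))
  have hsup : U ⊔ ⨆ i ∈ I ∪ J, W i = (U ⊔ ⨆ i ∈ I, W i) ⊔ (U ⊔ ⨆ i ∈ J, W i) := by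
    rw [Finset.iSup_union, sup_sup_sup_comm, sup_idem]
  have hinf : U ⊔ ⨆ i ∈ I ∩ J, W i ≤ (U ⊔ ⨆ i ∈ I, W i) ⊓ (U ⊔ ⨆ i ∈ J, W i) :=
    le_inf (sup_le_sup_left (biSup_mono fun i hi => (mem_inter.1 hi).1) _)
      (sup_le_sup_left (biSup_mono fun i hi => (mem_inter.1 hi).2) _)
  have hmod := finrank_sup_add_finrank_inf_eq (U ⊔ ⨆ i ∈ I, W i) (U ⊔ ⨆ i ∈ J, W i)
  have hIJ := (h _ (inter_subset_left.trans hIS)).trans (finrank_mono hinf)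
  have hcard := card_union_add_card_inter I J
  unfold IsTight at hI hJ
  rw [hsup]
  omega

theorem RadoCondition.exists_greatest_isTight [FiniteDimensional K V]
    (h : RadoCondition U W S) : ∃ T ⊆ S, IsTight U W T ∧ ∀ I ⊆ S, IsTight U W I → I ⊆ T := by
  classical
  set T := (S.powerset.filter (IsTight U W)).sup id
  have hT : T ⊆ S ∧ IsTight U W T :=
    sup_induction (p := fun T => T ⊆ S ∧ IsTight U W T) ⟨empty_subset _, isTight_empty⟩
      (fun I hI J hJ => ⟨union_subset hI.1 hJ.1, hI.2.union h hI.1 hJ.1 hJ.2⟩)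
      (fun I hI => by simpa using hI)
  exact ⟨T, hT.1, hT.2, fun I hIS hI => le_sup (f := id) (mem_filter.2 ⟨mem_powerset.2 hIS, hI⟩)⟩

theorem RadoCondition.not_le_sup_of_isTight [DecidableEq ι] {a : ι}
    (h : RadoCondition U W (insert a S)) (ha : a ∉ S) (hTS : T ⊆ S) (hT : IsTight U W T) :
    ¬ W a ≤ U ⊔ ⨆ i ∈ T, W i := by
  intro hle
  have hrank := h (insert a T) (insert_subset_insert a hTS)
  rw [card_insert_of_notMem fun haT => ha (hTS haT), Finset.iSup_insert, sup_left_comm,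
    sup_eq_right.2 hle] at hrank
  unfold IsTight at hT
  omega

theorem RadoCondition.sup_span_singleton [FiniteDimensional K V] (h : RadoCondition U W S)
    (hT : ∀ I ⊆ S, IsTight U W I → I ⊆ T) {v : V} (hv : v ∉ U ⊔ ⨆ i ∈ T, W i) :
    RadoCondition (U ⊔ span K {v}) W S := by
  intro I hIS
  have hvU : v ∉ U := fun hvU => hv (mem_sup_left hvU)
  rw [finrank_sup_span_singleton hvU, sup_right_comm]
  by_cases hI : IsTight U W I
  · have hvI : v ∉ U ⊔ ⨆ i ∈ I, W i :=
      fun hvI => hv (sup_le_sup_left (biSup_mono fun i hi => hT I hIS hI hi) U hvI)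
    rw [finrank_sup_span_singleton hvI, hI]
    omega
  · have := h I hIS
    have := finrank_mono (le_sup_left : U ⊔ ⨆ i ∈ I, W i ≤ _ ⊔ span K {v})
    unfold IsTight at hI
    omega

theorem eq_zero_of_sum_insert_smul_mem [DecidableEq ι] {v : ι → V} {a : ι} (ha : a ∉ S)
    (hva : v a ∉ U)
    (hS : ∀ g : ι → K, ∑ i ∈ S, g i • v i ∈ U ⊔ span K {v a} → ∀ i ∈ S, g i = 0)
    (g : ι → K) (hg : ∑ i ∈ insert a S, g i • v i ∈ U) : ∀ i ∈ insert a S, g i = 0 := by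
  rw [sum_insert ha] at hg
  have hgS : ∀ i ∈ S, g i = 0 := hS g <| by
    rw [← add_sub_cancel_left (g a • v a) (∑ i ∈ S, g i • v i)]
    exact sub_mem (mem_sup_left hg) (mem_sup_right (smul_mem _ _ (mem_span_singleton_self _)))
  rw [sum_eq_zero fun i hi => by rw [hgS i hi, zero_smul], add_zero] at hg
  have hga : g a = 0 := by
    by_contra hne
    exact hva ((smul_mem_iff _ hne).1 hg)
  intro i hi
  rcases mem_insert.1 hi with rfl | hi
  exacts [hga, hgS i hi]

theorem RadoCondition.exists_choice [FiniteDimensional K V] [DecidableEq ι] {κ : ι → Type*}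
    [∀ i, Nonempty (κ i)]
    (c : (i : ι) → κ i → V) (S : Finset ι) (U : Submodule K V)
    (h : RadoCondition U (fun i => span K (Set.range (c i))) S) :
    ∃ k : (i : ι) → κ i, ∀ g : ι → K, ∑ i ∈ S, g i • c i (k i) ∈ U → ∀ i ∈ S, g i = 0 := by
  induction S using Finset.induction_on generalizing U with
  | empty => exact ⟨fun _ => Classical.arbitrary _, by simp⟩
  | @insert a S ha ih =>
    obtain ⟨T, hTS, hT, hTmax⟩ := (h.mono (subset_insert a S)).exists_greatest_isTight
    obtain ⟨ka, hka⟩ : ∃ ka, c a ka ∉ U ⊔ ⨆ i ∈ T, span K (Set.range (c i)) := by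
      by_contra! hall
      exact h.not_le_sup_of_isTight ha hTS hT (span_le.2 (Set.range_subset_iff.2 hall))
    obtain ⟨k, hk⟩ := ih _ ((h.mono (subset_insert a S)).sup_span_singleton hTmax hka)
    refine ⟨Function.update k a ka, eq_zero_of_sum_insert_smul_mem ha ?_ ?_⟩
    · simpa using fun hU => hka (mem_sup_left hU)
    · intro g hg
      refine hk g ?_
      rwa [sum_congr rfl fun i hi => by rw [Function.update_of_ne (ne_of_mem_of_not_mem hi ha)],
        Function.update_self] at hg

theorem exists_linearIndependent_of_card_le_finrank [FiniteDimensional K V] [Fintype ι]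
    {κ : ι → Type*} (c : (i : ι) → κ i → V)
    (h : ∀ I : Finset ι, #I ≤ finrank K ↥(⨆ i ∈ I, span K (Set.range (c i)))) :
    ∃ k : (i : ι) → κ i, LinearIndependent K fun i => c i (k i) := by
  classical
  have : ∀ i, Nonempty (κ i) := fun i => by
    by_contra hi
    simpa [not_nonempty_iff.1 hi] using h {i}
  obtain ⟨k, hk⟩ := RadoCondition.exists_choice c univ (⊥ : Submodule K V) fun I _ => by
    rw [finrank_bot, add_zero, bot_sup_eq]; exact h I
  exact ⟨k, Fintype.linearIndependent_iff.2 fun g hg i => hk g (by simp [hg]) i (mem_univ i)⟩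

end Submodule

namespace Matrix

theorem rank_sum_sum_vecMulVec_le {m R ι : Type*} [Field R] [Fintype m] {κ : ι → Type*}
    [∀ i, Fintype (κ i)] (I : Finset ι) (u w : (i : ι) → κ i → m → R) :
    (∑ i ∈ I, ∑ j, vecMulVec (u i j) (w i j)).rank ≤
      finrank R ↥(⨆ i ∈ I, span R (Set.range (u i))) := by
  refine finrank_mono ?_
  rintro _ ⟨y, rfl⟩
  simp only [mulVecLin_apply, sum_mulVec, vecMulVec_mulVec, op_smul_eq_smul]
  exact sum_mem fun i hi => le_biSup (fun i => span R (Set.range (u i))) hi <|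
    sum_mem fun j _ => smul_mem _ _ (subset_span ⟨j, rfl⟩)

end Matrix

section MixedDiscriminant

variable {n : ℕ}

noncomputable def mixedDiscriminantMultilinear (n : ℕ) :
    MultilinearMap ℂ (fun _ : Fin n => Matrix (Fin n) (Fin n) ℂ) ℂ :=
  (n ! : ℂ)⁻¹ • ∑ σ : Equiv.Perm (Fin n),
    (detRowAlternating.toMultilinearMap.compLinearMap fun j =>
      (LinearMap.proj j).comp (transposeLinearEquiv (Fin n) (Fin n) ℂ ℂ).toLinearMap).domDomCongr σ

theorem mixedDiscriminantMultilinear_apply (A : Fin n → Matrix (Fin n) (Fin n) ℂ) :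
    mixedDiscriminantMultilinear n A = mixedDiscriminant n A := by
  simp only [mixedDiscriminantMultilinear, mixedDiscriminant, _root_.smul_apply,
    _root_.sum_apply, smul_eq_mul]
  congr 1
  refine sum_congr rfl fun σ _ => ?_
  rw [← det_transpose]
  rfl

theorem mixedDiscriminant_sum {κ : Fin n → Type*} [∀ i, Fintype (κ i)]
    (A : (i : Fin n) → κ i → Matrix (Fin n) (Fin n) ℂ) :
    mixedDiscriminant n (fun i => ∑ j, A i j) =
      ∑ f : (i : Fin n) → κ i, mixedDiscriminant n (fun i => A i (f i)) := by
  simp only [← mixedDiscriminantMultilinear_apply, MultilinearMap.map_sum]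

theorem mixedDiscriminant_vecMulVec_star (v : Fin n → Fin n → ℂ) :
    mixedDiscriminant n (fun i => vecMulVec (v i) (star (v i))) =
      ((Complex.normSq (of v).det / n ! : ℝ) : ℂ) := by
  have hσ : ∀ σ : Equiv.Perm (Fin n),
      (of fun i j => vecMulVec (v (σ j)) (star (v (σ j))) i j).det =
        (of v).det * (Equiv.Perm.sign σ * ∏ j, star (v (σ j) j)) := by
    intro σ
    have hcols : (of fun i j => vecMulVec (v (σ j)) (star (v (σ j))) i j) =
        of fun i j => star (v (σ j) j) * (of v)ᵀ.submatrix id σ i j := by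
      ext i j
      simp [vecMulVec_apply, mul_comm]
    rw [hcols, det_mul_row, det_permute', det_transpose]
    ring
  have hstar : ∑ σ : Equiv.Perm (Fin n), (Equiv.Perm.sign σ : ℂ) * ∏ j, star (v (σ j) j) =
      star (of v).det := by
    rw [← det_conjTranspose, ← det_transpose, det_apply']
    rfl
  rw [mixedDiscriminant, sum_congr rfl fun σ _ => hσ σ, ← mul_sum, hstar, ← starRingEnd_apply,
    Complex.mul_conj]
  push_cast
  ring

theorem mixedDiscriminant_sum_vecMulVec_star_pos {κ : Fin n → Type*} [∀ i, Fintype (κ i)]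
    (c : (i : Fin n) → κ i → Fin n → ℂ) (k : (i : Fin n) → κ i)
    (hk : LinearIndependent ℂ fun i => c i (k i)) :
    0 < mixedDiscriminant n (fun i => ∑ j, vecMulVec (c i j) (star (c i j))) := by
  have hdet : (of fun i => c i (k i)).det ≠ 0 :=
    (isUnit_iff_isUnit_det _).1 (linearIndependent_rows_iff_isUnit.1 hk) |>.ne_zero
  simp only [mixedDiscriminant_sum, mixedDiscriminant_vecMulVec_star, ← Complex.ofReal_sum,
    Complex.zero_lt_real]
  exact sum_pos' (fun f _ => div_nonneg (Complex.normSq_nonneg _) (by positivity))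
    ⟨k, mem_univ k, div_pos (Complex.normSq_pos.2 hdet) (by positivity)⟩

end MixedDiscriminant

/-- Alexandrov–Panov positivity criterion: if positive semidefinite Hermitian
matrices `α₁, ..., αₙ` satisfy `rank (∑_{i ∈ I} α i) ≥ |I|` for every `I ⊆ [n]`,
then the mixed discriminant `D(α₁,...,αₙ)` is positive. -/
theorem mixedDiscriminant_pos_of_rank_ge
    (n : ℕ) (α : Fin n → Matrix (Fin n) (Fin n) ℂ) (hα : ∀ i, (α i).PosSemidef)
    (hr : ∀ I : Finset (Fin n), I.card ≤ (∑ i ∈ I, α i).rank) :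
    0 < mixedDiscriminant n α := by
  choose m c hc using fun i => posSemidef_iff_eq_sum_vecMulVec.1 (hα i)
  obtain ⟨k, hk⟩ := exists_linearIndependent_of_card_le_finrank c fun I =>
    (hr I).trans (by simpa only [hc] using rank_sum_sum_vecMulVec_le I c fun i j => star (c i j))
  rw [funext hc]
  exact mixedDiscriminant_sum_vecMulVec_star_pos c k hk
end

section
/- For integers p, q ≥ 1 and k ≥ 1, with N = k+p+q−1, we have C(N, p)·C(N, q) > C(N, p+k)·C(N, q+k), where C denotes the binomial coefficient. -/
/-!
With `a = p - 1`, `b = q - 1`, symmetry of binomial coefficients turns the left-hand side into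
`C(N, a) * C(N, b)` and the right-hand side into `C(N, a + 1) * C(N, b + 1)`. Stepping from `a` to
`a + 1` multiplies `C(N, a)` by `(N - a) / (a + 1)`, and the two ratios multiply to
`(k + p) (k + q) / (p q) > 1`.
-/

namespace Nat

theorem choose_mul_choose_lt_choose_succ_mul_choose_succ {n a b : ℕ} (h : a + b + 2 ≤ n) :
    n.choose a * n.choose b < n.choose (a + 1) * n.choose (b + 1) := by
  have hpos : 0 < n.choose a * n.choose b :=
    Nat.mul_pos (Nat.choose_pos (by omega)) (Nat.choose_pos (by omega))
  have hratio : (a + 1) * (b + 1) < (n - b) * (n - a) :=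
    Nat.mul_lt_mul'' (by omega) (by omega)
  refine Nat.lt_of_mul_lt_mul_right (a := (a + 1) * (b + 1)) ?_
  calc n.choose a * n.choose b * ((a + 1) * (b + 1))
      < n.choose a * n.choose b * ((n - b) * (n - a)) := Nat.mul_lt_mul_of_pos_left hratio hpos
    _ = n.choose (a + 1) * (a + 1) * (n.choose (b + 1) * (b + 1)) := by
        rw [Nat.choose_succ_right_eq, Nat.choose_succ_right_eq]; ring
    _ = n.choose (a + 1) * n.choose (b + 1) * ((a + 1) * (b + 1)) := by ring

end Nat

/-- For `p, q ≥ 1` and `k ≥ 1`, with `N = k + p + q - 1`, we have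
`C(N, p) * C(N, q) > C(N, p + k) * C(N, q + k)`. -/
theorem choose_mul_choose_gt
    (p q k : ℕ) (hp : 1 ≤ p) (hq : 1 ≤ q) (hk : 1 ≤ k) :
    (k + p + q - 1).choose (p + k) * (k + p + q - 1).choose (q + k) <
      (k + p + q - 1).choose p * (k + p + q - 1).choose q := by
  obtain ⟨a, rfl⟩ : ∃ a, p = a + 1 := ⟨p - 1, by omega⟩
  obtain ⟨b, rfl⟩ : ∃ b, q = b + 1 := ⟨q - 1, by omega⟩
  set N := k + (a + 1) + (b + 1) - 1
  have hsymm_p : N.choose (a + 1 + k) = N.choose b := Nat.choose_symm_of_eq_add (by omega)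
  have hsymm_q : N.choose (b + 1 + k) = N.choose a := Nat.choose_symm_of_eq_add (by omega)
  rw [hsymm_p, hsymm_q, Nat.mul_comm]
  exact Nat.choose_mul_choose_lt_choose_succ_mul_choose_succ (by omega)
end

section
/- Let r: 2^[m] → ℕ be a polymatroid rank function (normalized, monotone, submodular). Then the set P = { n ∈ ℕ^m : ∑_i n_i = r([m]) and ∑_{i∈I} n_i ≤ r(I) for all I ⊊ [m] } is nonempty. -/
/-!
Edmonds' greedy construction: order the ground set and give `i` the rank increment
`r (Iic i) - r (Iio i)` of the prefix chain. These telescope to `r univ`, and for an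
arbitrary `I` with largest element `a` and `s = I \ {a}`, submodularity applied to
`Iio a` and `I` shows that the increment at `a` is at most `r I - r s`.
-/

open Finset

namespace Polymatroid

variable {α : Type*} [LinearOrder α] [LocallyFiniteOrderBot α]

def greedyVector (r : Finset α → ℕ) (i : α) : ℕ := r (Iic i) - r (Iio i)

theorem Iio_union_insert_eq_Iic {s : Finset α} {a : α} (hs : ∀ x ∈ s, x < a) :
    Iio a ∪ insert a s = Iic a := by
  ext x
  simp only [mem_union, mem_insert, mem_Iio, mem_Iic]
  constructor
  · rintro (h | rfl | h)
    exacts [h.le, le_rfl, (hs x h).le]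
  · exact fun h => (lt_or_eq_of_le h).imp id Or.inl

theorem Iio_inter_insert_eq {s : Finset α} {a : α} (hs : ∀ x ∈ s, x < a) :
    Iio a ∩ insert a s = s := by
  ext x
  simp only [mem_inter, mem_insert, mem_Iio]
  constructor
  · rintro ⟨hx, rfl | h⟩
    exacts [absurd hx (lt_irrefl x), h]
  · exact fun h => ⟨hs x h, Or.inr h⟩

theorem greedyVector_add_le {r : Finset α → ℕ}
    (hmono : ∀ I J : Finset α, I ⊆ J → r I ≤ r J)
    (hsub : ∀ I J : Finset α, r (I ∪ J) + r (I ∩ J) ≤ r I + r J)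
    {s : Finset α} {a : α} (hs : ∀ x ∈ s, x < a) :
    greedyVector r a + r s ≤ r (insert a s) := by
  have h := hsub (Iio a) (insert a s)
  rw [Iio_union_insert_eq_Iic hs, Iio_inter_insert_eq hs] at h
  have := hmono s (insert a s) (subset_insert a s)
  unfold greedyVector
  omega

theorem sum_greedyVector_le {r : Finset α → ℕ} (h0 : r ∅ = 0)
    (hmono : ∀ I J : Finset α, I ⊆ J → r I ≤ r J)
    (hsub : ∀ I J : Finset α, r (I ∪ J) + r (I ∩ J) ≤ r I + r J) (I : Finset α) :
    ∑ i ∈ I, greedyVector r i ≤ r I := by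
  induction I using Finset.induction_on_max with
  | empty => simp [h0]
  | insert a s hs ih =>
    rw [sum_insert fun ha => lt_irrefl a (hs a ha)]
    linarith [greedyVector_add_le hmono hsub hs]

theorem sum_greedyVector_of_isLowerSet {r : Finset α → ℕ} (h0 : r ∅ = 0)
    (hmono : ∀ I J : Finset α, I ⊆ J → r I ≤ r J) {I : Finset α}
    (hI : IsLowerSet (I : Set α)) :
    ∑ i ∈ I, greedyVector r i = r I := by
  induction I using Finset.induction_on_max with
  | empty => simp [h0]
  | insert a s hs ih =>
    have has : a ∉ s := fun ha => lt_irrefl a (hs a ha)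
    have hs_eq : s = Iio a := by
      ext x
      refine ⟨fun hx => mem_Iio.2 (hs x hx), fun hx => ?_⟩
      have hxa : x ∈ insert a s := hI (mem_Iio.1 hx).le (mem_insert_self a s)
      exact (mem_insert.1 hxa).resolve_left (mem_Iio.1 hx).ne
    subst hs_eq
    have hle := hmono (Iio a) (Iic a) Iio_subset_Iic_self
    rw [sum_insert has, ih (by simpa using isLowerSet_Iio a), Iio_insert, greedyVector]
    omega

end Polymatroid

/-- The submodular theorem: the base of a discrete polymatroid is nonempty.
If `r : 2^[m] → ℕ` is normalized, monotone and submodular, then there is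
`n ∈ ℕ^m` with `∑ i, n i = r [m]` and `∑_{i ∈ I} n i ≤ r I` for all `I ⊊ [m]`. -/
theorem polymatroid_base_nonempty
    (m : ℕ) (r : Finset (Fin m) → ℕ)
    (h0 : r ∅ = 0)
    (hmono : ∀ I J : Finset (Fin m), I ⊆ J → r I ≤ r J)
    (hsub : ∀ I J : Finset (Fin m), r (I ∪ J) + r (I ∩ J) ≤ r I + r J) :
    ∃ nvec : Fin m → ℕ, ∑ i, nvec i = r Finset.univ ∧
      ∀ I : Finset (Fin m), I ⊂ Finset.univ → ∑ i ∈ I, nvec i ≤ r I :=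
  ⟨Polymatroid.greedyVector r,
    Polymatroid.sum_greedyVector_of_isLowerSet h0 hmono (by simpa using isLowerSet_univ),
    fun I _ => Polymatroid.sum_greedyVector_le h0 hmono hsub I⟩
end
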